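/- In the planar n-complex algebra ℝ[X]/(X^n + 1) with even n, the bases e_k = (2/n)Σ_{p=0}^{n-1} cos(π(2k-1)p/n) h_p and ẽ_k = (2/n)Σ_{p=0}^{n-1} sin(π(2k-1)p/n) h_p (for 1 ≤ k ≤ n/2) satisfy e_k² = e_k, ẽ_k² = -e_k, e_k ẽ_k = ẽ_k, and e_k e_l = e_k ẽ_l = ẽ_k ẽ_l = 0 for k ≠ l; moreover Σ_{k=1}^{n/2}(e_k v_k + ẽ_k ṽ_k) recovers any element with components x_p, where v_k = Σ_p x_p cos(π(2k-1)p/n) and ṽ_k = Σ_p x_p sin(π(2k-1)p/n). -/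

import Mathlib

open scoped Real
open Complex Polynomial


/-- The planar n-complex algebra `ℝ[X]/(X^n + 1)`. -/
noncomputable abbrev PlanarC (n : ℕ) : Type :=
  AdjoinRoot ((Polynomial.X : Polynomial ℝ) ^ n + 1)

/-- The planar basis `h_p`, the class of `X^p`. -/
noncomputable def hP (n p : ℕ) : PlanarC n := (AdjoinRoot.root _) ^ p

/-- `e_k`. -/
noncomputable def eK (n k : ℕ) : PlanarC n :=
  ((2 : ℝ) / n) • ∑ p ∈ Finset.range n, (Real.cos (π * (2 * k - 1) * p / n)) • hP n p

/-- `ẽ_k`. -/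
noncomputable def eTildeK (n k : ℕ) : PlanarC n :=
  ((2 : ℝ) / n) • ∑ p ∈ Finset.range n, (Real.sin (π * (2 * k - 1) * p / n)) • hP n p

namespace PlanarAux

lemma exp_pi_eq (n : ℕ) (hn : 0 < n) (a b : ℤ) :
    Complex.exp (π * a / n * Complex.I) = Complex.exp (π * b / n * Complex.I) ↔
      (2 * (n:ℤ)) ∣ (a - b) := by
  rw [Complex.exp_eq_exp_iff_exists_int]
  have hn' : (n:ℝ) ≠ 0 := by positivity
  constructor
  · rintro ⟨t, ht⟩
    refine ⟨t, ?_⟩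
    have h2 : ((π * a / n : ℝ) : ℂ) * I = ((π * b / n + t * (2*π) : ℝ) : ℂ) * I := by
      push_cast
      rw [ht]; ring
    have h3 : (π * a / n : ℝ) = π * b / n + t * (2*π) := by
      have := mul_right_cancel₀ Complex.I_ne_zero h2
      exact_mod_cast this
    have h4 : (a : ℝ) = b + 2 * n * t := by
      field_simp at h3
      nlinarith [Real.pi_pos]
    have h5 : (a : ℝ) - b = 2 * n * t := by linarith
    exact_mod_cast h5
  · rintro ⟨t, ht⟩
    refine ⟨t, ?_⟩
    have h4 : (a : ℝ) = b + 2 * n * t := by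
      have : (a : ℝ) - b = 2 * n * t := by exact_mod_cast ht
      linarith
    have : (a : ℂ) = (b : ℂ) + 2 * n * t := by exact_mod_cast h4
    have hnC : (n:ℂ) ≠ 0 := by exact_mod_cast (Nat.cast_ne_zero.mpr hn.ne' : ((n:ℝ)) ≠ 0)
    rw [this]
    field_simp


lemma exp_pi_eq_one (n : ℕ) (hn : 0 < n) (m : ℤ) :
    Complex.exp (π * (2 * m) / n * Complex.I) = 1 ↔ (n:ℤ) ∣ m := by
  have h0 : Complex.exp (π * ((0:ℤ)) / n * Complex.I) = 1 := by
    norm_num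
  have h1 : (π : ℂ) * (2 * m) / n * Complex.I = π * ((2 * m : ℤ)) / n * Complex.I := by
    push_cast; ring
  rw [h1, ← h0, exp_pi_eq n hn]
  constructor
  · rintro ⟨t, ht⟩; exact ⟨t, by linarith⟩
  · rintro ⟨t, ht⟩; exact ⟨t, by linarith⟩

lemma sum_exp (n : ℕ) (hn : 0 < n) (m : ℤ) :
    ∑ p ∈ Finset.range n, Complex.exp (π * (2 * m) / n * Complex.I) ^ p
      = if (n:ℤ) ∣ m then (n : ℂ) else 0 := by
  by_cases h : (n:ℤ) ∣ m
  · rw [if_pos h, (exp_pi_eq_one n hn m).2 h]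
    simp
  · rw [if_neg h]
    have hz : Complex.exp (π * (2 * m) / n * Complex.I) ≠ 1 :=
      fun hc => h ((exp_pi_eq_one n hn m).1 hc)
    rw [geom_sum_eq hz]
    have hnC : (n:ℂ) ≠ 0 := Nat.cast_ne_zero.mpr hn.ne'
    have hzn : Complex.exp (π * (2 * m) / n * Complex.I) ^ n = 1 := by
      rw [← Complex.exp_nat_mul]
      have h1 : (n:ℂ) * (π * (2 * m) / n * Complex.I) = (m:ℤ) * (2 * π * Complex.I) := by
        field_simp
      rw [h1, Complex.exp_int_mul_two_pi_mul_I]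
    rw [hzn]
    simp

/-- `ω_k = exp(iπ(2k-1)/n)`. -/
noncomputable def omg (n k : ℕ) : ℂ := Complex.exp (π * (2 * k - 1) / n * Complex.I)

lemma omg_eq_int (n k : ℕ) :
    omg n k = Complex.exp (π * ((2 * k - 1 : ℤ)) / n * Complex.I) := by
  rw [omg]
  congr 2
  push_cast
  ring

lemma omg_pow_n (n k : ℕ) (hn : 0 < n) : omg n k ^ n = -1 := by
  have hnC : (n:ℂ) ≠ 0 := Nat.cast_ne_zero.mpr hn.ne'
  rw [omg, ← Complex.exp_nat_mul]
  have h1 : (n:ℂ) * (π * (2 * k - 1) / n * Complex.I)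
      = (k:ℤ) * (2 * π * Complex.I) + -(π * Complex.I) := by
    field_simp; push_cast; ring
  rw [h1, Complex.exp_add, Complex.exp_int_mul_two_pi_mul_I, Complex.exp_neg,
    Complex.exp_pi_mul_I]
  norm_num


/-- Evaluation at `ω_k`. -/
noncomputable def phiK (n k : ℕ) (hn : 0 < n) : PlanarC n →ₐ[ℝ] ℂ :=
  AdjoinRoot.liftAlgHom _ (Algebra.ofId ℝ ℂ) (omg n k) (by
    simp only [Polynomial.eval₂_add, Polynomial.eval₂_X_pow, Polynomial.eval₂_one]
    rw [omg_pow_n n k hn]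
    ring)

lemma phiK_hP (n k p : ℕ) (hn : 0 < n) : phiK n k hn (hP n p) = omg n k ^ p := by
  rw [hP, map_pow, phiK, AdjoinRoot.liftAlgHom_root]

lemma omg_mul (n k l : ℕ) :
    omg n l * omg n k = Complex.exp (π * (2 * ((k:ℤ) + l - 1)) / n * Complex.I) := by
  rw [omg, omg, ← Complex.exp_add]
  congr 1
  push_cast
  ring

lemma conj_omg (n k : ℕ) :
    (starRingEnd ℂ) (omg n k) = Complex.exp (-(π * (2 * k - 1) / n * Complex.I)) := by
  rw [omg, ← Complex.exp_conj]
  congr 1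
  simp [map_div₀, map_mul, Complex.conj_ofReal, Complex.conj_I, map_ofNat]

lemma conj_omg_mul (n k l : ℕ) :
    (starRingEnd ℂ) (omg n l) * omg n k
      = Complex.exp (π * (2 * ((k:ℤ) - l)) / n * Complex.I) := by
  rw [conj_omg, omg, ← Complex.exp_add]
  congr 1
  push_cast
  ring


lemma exp_om (n l p : ℕ) :
    Complex.exp (((π * (2 * l - 1) * p / n : ℝ) : ℂ) * Complex.I) = omg n l ^ p := by
  rw [omg, ← Complex.exp_nat_mul]
  congr 1
  push_cast
  ring

lemma exp_om_neg (n l p : ℕ) :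
    Complex.exp (-((π * (2 * l - 1) * p / n : ℝ) : ℂ) * Complex.I)
      = ((starRingEnd ℂ) (omg n l)) ^ p := by
  rw [conj_omg, ← Complex.exp_nat_mul]
  congr 1
  push_cast
  ring

lemma not_dvd_sum (n k l : ℕ) (hk1 : 1 ≤ k) (hk2 : k ≤ n/2) (hl1 : 1 ≤ l)
    (hl2 : l ≤ n/2) : ¬ ((n:ℤ) ∣ ((k:ℤ) + l - 1)) := by
  intro h
  have h0 := Int.eq_zero_of_dvd_of_natAbs_lt_natAbs h (by omega)
  omega

lemma dvd_diff_iff (n k l : ℕ) (hk1 : 1 ≤ k) (hk2 : k ≤ n/2) (hl1 : 1 ≤ l)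
    (hl2 : l ≤ n/2) : ((n:ℤ) ∣ ((k:ℤ) - l)) ↔ k = l := by
  constructor
  · intro h
    have h0 := Int.eq_zero_of_dvd_of_natAbs_lt_natAbs h (by omega)
    omega
  · rintro rfl; simp

lemma phi_eK (n k l : ℕ) (hn : 0 < n) (hk1 : 1 ≤ k) (hk2 : k ≤ n/2) (hl1 : 1 ≤ l)
    (hl2 : l ≤ n/2) :
    phiK n k hn (eK n l) = if k = l then 1 else 0 := by
  have hnC : (n:ℂ) ≠ 0 := Nat.cast_ne_zero.mpr hn.ne'
  rw [eK, map_smul, map_sum]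
  simp only [map_smul, phiK_hP]
  have key : ∀ p : ℕ, (Real.cos (π * (2 * l - 1) * p / n) : ℝ) • omg n k ^ p
      = ((omg n l * omg n k) ^ p + ((starRingEnd ℂ) (omg n l) * omg n k) ^ p) / 2 := by
    intro p
    rw [Complex.real_smul, Complex.ofReal_cos]
    have h2 := Complex.two_cos (((π * (2 * l - 1) * p / n : ℝ) : ℂ))
    rw [exp_om, exp_om_neg] at h2
    rw [mul_pow, mul_pow]
    linear_combination (omg n k ^ p / 2) * h2
  simp only [key]
  have s1 := sum_exp n hn ((k:ℤ) + l - 1)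
  have s2 := sum_exp n hn ((k:ℤ) - l)
  push_cast at s1 s2
  rw [← Finset.sum_div, Finset.sum_add_distrib, omg_mul, conj_omg_mul, Complex.real_smul]
  push_cast
  rw [s1, s2, if_neg (not_dvd_sum n k l hk1 hk2 hl1 hl2)]
  simp only [dvd_diff_iff n k l hk1 hk2 hl1 hl2]
  split_ifs with h
  · field_simp; simp
  · simp

lemma phi_eTildeK (n k l : ℕ) (hn : 0 < n) (hk1 : 1 ≤ k) (hk2 : k ≤ n/2) (hl1 : 1 ≤ l)
    (hl2 : l ≤ n/2) :
    phiK n k hn (eTildeK n l) = if k = l then Complex.I else 0 := by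
  have hnC : (n:ℂ) ≠ 0 := Nat.cast_ne_zero.mpr hn.ne'
  rw [eTildeK, map_smul, map_sum]
  simp only [map_smul, phiK_hP]
  have key : ∀ p : ℕ, (Real.sin (π * (2 * l - 1) * p / n) : ℝ) • omg n k ^ p
      = ((((starRingEnd ℂ) (omg n l) * omg n k) ^ p - (omg n l * omg n k) ^ p)
          * Complex.I) / 2 := by
    intro p
    rw [Complex.real_smul, Complex.ofReal_sin]
    have h2 := Complex.two_sin (((π * (2 * l - 1) * p / n : ℝ) : ℂ))
    rw [exp_om, exp_om_neg] at h2
    rw [mul_pow, mul_pow]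
    linear_combination (omg n k ^ p / 2) * h2
  simp only [key]
  have s1 := sum_exp n hn ((k:ℤ) + l - 1)
  have s2 := sum_exp n hn ((k:ℤ) - l)
  push_cast at s1 s2
  rw [← Finset.sum_div, ← Finset.sum_mul, Finset.sum_sub_distrib, omg_mul, conj_omg_mul,
    Complex.real_smul]
  push_cast
  rw [s1, s2, if_neg (not_dvd_sum n k l hk1 hk2 hl1 hl2)]
  simp only [dvd_diff_iff n k l hk1 hk2 hl1 hl2]
  split_ifs with h
  · field_simp
    ring
  · simp


lemma phi_inj (n : ℕ) (hne : Even n) (hn : 0 < n) (z : PlanarC n)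
    (h : ∀ k, 1 ≤ k → k ≤ n / 2 → phiK n k hn z = 0) : z = 0 := by
  obtain ⟨f, rfl⟩ := AdjoinRoot.mk_surjective z
  set q : Polynomial ℝ := X ^ n + 1 with hq
  have hmonic : q.Monic := by
    have := Polynomial.monic_X_pow_add_C (1:ℝ) hn.ne'
    simpa [hq] using this
  set g := f %ₘ q with hgdef
  have hmk : AdjoinRoot.mk q f = AdjoinRoot.mk q g := by
    rw [AdjoinRoot.mk_eq_mk, hgdef, Polynomial.modByMonic_eq_sub_mul_div f q]
    exact ⟨f /ₘ q, by ring⟩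
  rw [hmk]
  have heval : ∀ k, 1 ≤ k → k ≤ n/2 → Polynomial.aeval (omg n k) g = 0 := by
    intro k h1 h2
    have hk := h k h1 h2
    rw [hmk, phiK, AdjoinRoot.liftAlgHom_mk] at hk; exact hk
  have hg0 : g = 0 := by
    by_contra hg0
    have hdeg : g.natDegree < n := by
      have h1 : g.degree < q.degree := Polynomial.degree_modByMonic_lt f hmonic
      have h2 : q.degree = n := by
        rw [hq]
        have := Polynomial.degree_X_pow_add_C (R := ℝ) hn (1:ℝ)
        simpa using this
      rw [h2] at h1
      exact (Polynomial.natDegree_lt_iff_degree_lt hg0).mpr h1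
    set G := g.map (algebraMap ℝ ℂ) with hG
    have hGe : ∀ x : ℂ, G.eval x = Polynomial.aeval x g := by
      intro x
      rw [hG, Polynomial.eval_map, Polynomial.aeval_def]
    have hGne : G ≠ 0 := by
      rw [hG, Ne, Polynomial.map_eq_zero_iff (algebraMap ℝ ℂ).injective]
      exact hg0
    have hGdeg : G.natDegree < n := by
      rwa [hG, Polynomial.natDegree_map_eq_of_injective (algebraMap ℝ ℂ).injective]
    set W : ℤ → ℂ := fun a => Complex.exp (π * a / n * Complex.I) with hW
    have hWeq : ∀ a b : ℤ, W a = W b ↔ (2 * (n:ℤ)) ∣ (a - b) := fun a b => exp_pi_eq n hn a b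
    have hinj : Function.Injective (fun j : Fin n => W (2 * (j:ℕ) + 1)) := by
      intro j j' hjj
      have hd := (hWeq _ _).1 hjj
      have h0 := Int.eq_zero_of_dvd_of_natAbs_lt_natAbs hd (by
        have := j.isLt
        have := j'.isLt
        omega)
      have : (j:ℕ) = (j':ℕ) := by omega
      exact Fin.ext this
    have hroots : ∀ j : Fin n, G.eval (W (2 * (j:ℕ) + 1)) = 0 := by
      intro j
      have hjlt := j.isLt
      rcases lt_or_ge (j:ℕ) (n/2) with hc | hc
      · have hko : omg n ((j:ℕ)+1) = W (2 * (j:ℕ) + 1) := by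
          rw [omg_eq_int, hW]
          congr 2
          push_cast
          ring
        rw [hGe, ← hko]
        exact heval ((j:ℕ)+1) (by omega) (by omega)
      · set k := n - (j:ℕ) with hk
        have hk1 : 1 ≤ k := by omega
        have hk2 : k ≤ n/2 := by
          obtain ⟨m, hm⟩ := hne
          omega
        have hco : (starRingEnd ℂ) (omg n k) = W (-(2 * (k:ℤ) - 1)) := by
          rw [conj_omg, hW]
          congr 1
          push_cast
          ring
        have hWW : W (2 * (j:ℕ) + 1) = W (-(2 * (k:ℤ) - 1)) := by
          rw [hWeq]
          refine ⟨1, ?_⟩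
          have hkj : (k:ℤ) = n - (j:ℕ) := by omega
          rw [hkj]; ring
        rw [hWW, ← hco, hGe, Polynomial.aeval_conj, heval k hk1 hk2, map_zero]
    have := Polynomial.eq_zero_of_natDegree_lt_card_of_eval_eq_zero G hinj hroots
      (by simpa using hGdeg)
    exact hGne this
  rw [hg0, map_zero]

end PlanarAux


theorem planar_idempotent_bases (n : ℕ) (hn : Even n) (hn1 : 1 ≤ n) :
    (∀ k, 1 ≤ k → k ≤ n / 2 →
      eK n k ^ 2 = eK n k ∧ eTildeK n k ^ 2 = -eK n k ∧
      eK n k * eTildeK n k = eTildeK n k) ∧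
    (∀ k l, 1 ≤ k → k ≤ n / 2 → 1 ≤ l → l ≤ n / 2 → k ≠ l →
      eK n k * eK n l = 0 ∧ eK n k * eTildeK n l = 0 ∧
      eTildeK n k * eTildeK n l = 0) ∧
    (∀ x : ℕ → ℝ,
      ∑ p ∈ Finset.range n, (x p) • hP n p =
        ∑ k ∈ Finset.Icc 1 (n / 2),
          ((∑ p ∈ Finset.range n, x p * Real.cos (π * (2 * k - 1) * p / n)) • eK n k +
           (∑ p ∈ Finset.range n, x p * Real.sin (π * (2 * k - 1) * p / n)) • eTildeK n k)) := by
  have hn0 : 0 < n := hn1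
  have crit : ∀ z w : PlanarC n,
      (∀ m, 1 ≤ m → m ≤ n / 2 → PlanarAux.phiK n m hn0 z = PlanarAux.phiK n m hn0 w) →
      z = w := by
    intro z w hzw
    have h0 := PlanarAux.phi_inj n hn hn0 (z - w)
      (fun m h1 h2 => by rw [map_sub, hzw m h1 h2, sub_self])
    exact sub_eq_zero.mp h0
  refine ⟨fun k h1 h2 => ⟨?_, ?_, ?_⟩, fun k l hk1 hk2 hl1 hl2 hkl => ⟨?_, ?_, ?_⟩,
    fun x => ?_⟩
  · refine crit _ _ fun m m1 m2 => ?_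
    rw [map_pow, PlanarAux.phi_eK n m k hn0 m1 m2 h1 h2]
    split_ifs <;> norm_num
  · refine crit _ _ fun m m1 m2 => ?_
    rw [map_pow, map_neg, PlanarAux.phi_eTildeK n m k hn0 m1 m2 h1 h2,
      PlanarAux.phi_eK n m k hn0 m1 m2 h1 h2]
    split_ifs <;> simp [Complex.I_sq]
  · refine crit _ _ fun m m1 m2 => ?_
    rw [map_mul, PlanarAux.phi_eK n m k hn0 m1 m2 h1 h2,
      PlanarAux.phi_eTildeK n m k hn0 m1 m2 h1 h2]
    split_ifs <;> simp
  · refine crit _ _ fun m m1 m2 => ?_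
    rw [map_mul, map_zero, PlanarAux.phi_eK n m k hn0 m1 m2 hk1 hk2,
      PlanarAux.phi_eK n m l hn0 m1 m2 hl1 hl2]
    split_ifs <;> simp_all
  · refine crit _ _ fun m m1 m2 => ?_
    rw [map_mul, map_zero, PlanarAux.phi_eK n m k hn0 m1 m2 hk1 hk2,
      PlanarAux.phi_eTildeK n m l hn0 m1 m2 hl1 hl2]
    split_ifs <;> simp_all
  · refine crit _ _ fun m m1 m2 => ?_
    rw [map_mul, map_zero, PlanarAux.phi_eTildeK n m k hn0 m1 m2 hk1 hk2,
      PlanarAux.phi_eTildeK n m l hn0 m1 m2 hl1 hl2]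
    split_ifs <;> simp_all
  · refine crit _ _ fun m m1 m2 => ?_
    rw [map_sum, map_sum]
    have hL : ∀ p ∈ Finset.range n,
        PlanarAux.phiK n m hn0 ((x p) • hP n p) = (x p : ℂ) * PlanarAux.omg n m ^ p := by
      intro p _
      rw [map_smul, PlanarAux.phiK_hP, Complex.real_smul]
    rw [Finset.sum_congr rfl hL]
    have hR : ∀ j ∈ Finset.Icc 1 (n / 2),
        PlanarAux.phiK n m hn0
          ((∑ p ∈ Finset.range n, x p * Real.cos (π * (2 * j - 1) * p / n)) • eK n j +
           (∑ p ∈ Finset.range n, x p * Real.sin (π * (2 * j - 1) * p / n)) • eTildeK n j)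
        = if m = j then
            ((∑ p ∈ Finset.range n, x p * Real.cos (π * (2 * j - 1) * p / n) : ℝ) : ℂ)
            + ((∑ p ∈ Finset.range n, x p * Real.sin (π * (2 * j - 1) * p / n) : ℝ) : ℂ)
              * Complex.I
          else 0 := by
      intro j hj
      rw [Finset.mem_Icc] at hj
      rw [map_add, map_smul, map_smul, PlanarAux.phi_eK n m j hn0 m1 m2 hj.1 hj.2,
        PlanarAux.phi_eTildeK n m j hn0 m1 m2 hj.1 hj.2, Complex.real_smul,
        Complex.real_smul]
      split_ifs <;> simp
    rw [Finset.sum_congr rfl hR, Finset.sum_ite_eq (Finset.Icc 1 (n / 2)) m,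
      if_pos (Finset.mem_Icc.mpr ⟨m1, m2⟩)]
    push_cast
    rw [Finset.sum_mul, ← Finset.sum_add_distrib]
    refine Finset.sum_congr rfl fun p _ => ?_
    have he := PlanarAux.exp_om n m p
    rw [← he, Complex.exp_mul_I]
    push_cast
    ring
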